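/- The LOT approximation is bounded above by the optimal transport cost through the reference: for discrete probability measures R, E, Ẽ on ℝ^d with optimal plans r ∈ Γ₀(R,E), r̃ ∈ Γ₀(R,Ẽ), one has LOT_{r,r̃}(E,Ẽ) ≤ W₂(R,E) + W₂(R,Ẽ). -/

import Mathlib

/-!
By Jensen's inequality for the convex function `v ↦ ‖y - v‖²`, replacing a transport plan by its
barycentric projection can only decrease the cost: `∑ᵢ Rᵢ ‖yᵢ - zᵢ‖² ≤ ∑ᵢⱼ rᵢⱼ ‖yᵢ - xⱼ‖²`.
The theorem then follows from the triangle inequality `z - z' = (z - y) + (y - z')` in the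
`R`-weighted `L²` space of `ι`-indexed families.
-/

open Finset

noncomputable section

variable {d : ℕ}

/-- The 2-Wasserstein distance between finitely supported measures, as an infimum over
discrete transport plans. -/
noncomputable def discW2 {ι κ : Type*} [Fintype ι] [Fintype κ]
    (R : ι → ℝ) (y : ι → EuclideanSpace ℝ (Fin d))
    (E : κ → ℝ) (x : κ → EuclideanSpace ℝ (Fin d)) : ℝ :=
  sInf { c | ∃ g : ι → κ → ℝ, (∀ i j, 0 ≤ g i j) ∧ (∀ i, ∑ j, g i j = R i) ∧
    (∀ j, ∑ i, g i j = E j) ∧ c = Real.sqrt (∑ i, ∑ j, g i j * ‖y i - x j‖ ^ 2) }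

section

variable {ι E : Type*} [Fintype ι] [SeminormedAddCommGroup E] [NormedSpace ℝ E]

theorem convexOn_norm_const_sub_sq (y : E) : ConvexOn ℝ Set.univ fun v : E => ‖y - v‖ ^ 2 :=
  (convexOn_univ_norm.pow (fun _ _ => norm_nonneg _) 2).comp_affineMap
    (AffineMap.const ℝ E y - AffineMap.id ℝ E)

theorem sum_mul_norm_sub_centerMass_sq_le {w : ι → ℝ} (hw : ∀ j, 0 ≤ w j) (y : E) (x : ι → E) :
    (∑ j, w j) * ‖y - univ.centerMass w x‖ ^ 2 ≤ ∑ j, w j * ‖y - x j‖ ^ 2 := by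
  rcases (sum_nonneg fun j _ => hw j).eq_or_lt with hzero | hpos
  · rw [← hzero, zero_mul]
    exact sum_nonneg fun j _ => mul_nonneg (hw j) (sq_nonneg _)
  have hjensen := (convexOn_norm_const_sub_sq y).map_centerMass_le (fun j _ => hw j) hpos
    (fun j _ => Set.mem_univ (x j))
  simp only [centerMass, smul_eq_mul, Function.comp_apply] at hjensen
  rwa [le_inv_mul_iff₀ hpos] at hjensen

theorem norm_toLp_sqrt_smul {w : ι → ℝ} (hw : ∀ i, 0 ≤ w i) (v : ι → E) :
    ‖(WithLp.toLp 2 fun i => √(w i) • v i : PiLp 2 fun _ : ι => E)‖ =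
      √(∑ i, w i * ‖v i‖ ^ 2) := by
  simp [PiLp.norm_eq_of_L2, norm_smul, mul_pow, Real.sq_sqrt (hw _)]

theorem sqrt_sum_mul_norm_sub_sq_le {w : ι → ℝ} (hw : ∀ i, 0 ≤ w i) (u v t : ι → E) :
    √(∑ i, w i * ‖u i - v i‖ ^ 2) ≤
      √(∑ i, w i * ‖u i - t i‖ ^ 2) + √(∑ i, w i * ‖t i - v i‖ ^ 2) := by
  let emb : (ι → E) → PiLp 2 fun _ : ι => E := fun f => WithLp.toLp 2 fun i => √(w i) • f i
  have hsub : ∀ f g, emb f - emb g = emb (f - g) := fun f g => by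
    ext i; simp [emb, smul_sub]
  simpa only [hsub, emb, norm_toLp_sqrt_smul hw, Pi.sub_apply] using
    norm_sub_le_norm_sub_add_norm_sub (emb u) (emb t) (emb v)

end

theorem LOT_le_W2_add_W2_general
    {ι κ κ' : Type*} [Fintype ι] [Fintype κ] [Fintype κ']
    (R : ι → ℝ) (y : ι → EuclideanSpace ℝ (Fin d))
    (E : κ → ℝ) (x : κ → EuclideanSpace ℝ (Fin d))
    (E' : κ' → ℝ) (x' : κ' → EuclideanSpace ℝ (Fin d))
    -- `r` is an optimal transport plan from `R` to `E`
    (r : ι → κ → ℝ) (hr : ∀ i j, 0 ≤ r i j)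
    (hrRow : ∀ i, ∑ j, r i j = R i)
    (hrOpt : Real.sqrt (∑ i, ∑ j, r i j * ‖y i - x j‖ ^ 2) = discW2 R y E x)
    -- `r'` is an optimal transport plan from `R` to `Ẽ`
    (r' : ι → κ' → ℝ) (hr' : ∀ i k, 0 ≤ r' i k)
    (hr'Row : ∀ i, ∑ k, r' i k = R i)
    (hr'Opt : Real.sqrt (∑ i, ∑ k, r' i k * ‖y i - x' k‖ ^ 2) = discW2 R y E' x')
    -- barycentric projections
    (z z' : ι → EuclideanSpace ℝ (Fin d))
    (hz : ∀ i, z i = (R i)⁻¹ • ∑ j, r i j • x j)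
    (hz' : ∀ i, z' i = (R i)⁻¹ • ∑ k, r' i k • x' k) :
    Real.sqrt (∑ i, R i * ‖z i - z' i‖ ^ 2) ≤ discW2 R y E x + discW2 R y E' x' := by
  have hR : ∀ i, 0 ≤ R i := fun i => hrRow i ▸ sum_nonneg fun j _ => hr i j
  have hJensen : ∀ i, R i * ‖z i - y i‖ ^ 2 ≤ ∑ j, r i j * ‖y i - x j‖ ^ 2 := fun i => by
    rw [norm_sub_rev, hz i, ← hrRow i]
    exact sum_mul_norm_sub_centerMass_sq_le (hr i) (y i) x
  have hJensen' : ∀ i, R i * ‖y i - z' i‖ ^ 2 ≤ ∑ k, r' i k * ‖y i - x' k‖ ^ 2 := fun i => by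
    rw [hz' i, ← hr'Row i]
    exact sum_mul_norm_sub_centerMass_sq_le (hr' i) (y i) x'
  calc √(∑ i, R i * ‖z i - z' i‖ ^ 2)
      ≤ √(∑ i, R i * ‖z i - y i‖ ^ 2) + √(∑ i, R i * ‖y i - z' i‖ ^ 2) :=
        sqrt_sum_mul_norm_sub_sq_le hR z z' y
    _ ≤ √(∑ i, ∑ j, r i j * ‖y i - x j‖ ^ 2) + √(∑ i, ∑ k, r' i k * ‖y i - x' k‖ ^ 2) := by
        gcongr with i _ i _
        exacts [hJensen i, hJensen' i]
    _ = discW2 R y E x + discW2 R y E' x' := by rw [hrOpt, hr'Opt]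

/-- The LOT approximation is bounded above by the optimal transport cost through the
reference: `LOT_{r,r̃}(E,Ẽ) ≤ W₂(R,E) + W₂(R,Ẽ)` for optimal plans `r, r̃`. -/
theorem LOT_le_W2_add_W2
    {ι κ κ' : Type*} [Fintype ι] [Fintype κ] [Fintype κ']
    (R : ι → ℝ) (y : ι → EuclideanSpace ℝ (Fin d))
    (E : κ → ℝ) (x : κ → EuclideanSpace ℝ (Fin d))
    (E' : κ' → ℝ) (x' : κ' → EuclideanSpace ℝ (Fin d))
    (hR : ∀ i, 0 < R i) (hE : ∀ j, 0 ≤ E j) (hE' : ∀ k, 0 ≤ E' k)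
    (hRsum : ∑ i, R i = 1) (hEsum : ∑ j, E j = 1) (hE'sum : ∑ k, E' k = 1)
    -- `r` is an optimal transport plan from `R` to `E`
    (r : ι → κ → ℝ) (hr : ∀ i j, 0 ≤ r i j)
    (hrRow : ∀ i, ∑ j, r i j = R i) (hrCol : ∀ j, ∑ i, r i j = E j)
    (hrOpt : Real.sqrt (∑ i, ∑ j, r i j * ‖y i - x j‖ ^ 2) = discW2 R y E x)
    -- `r'` is an optimal transport plan from `R` to `Ẽ`
    (r' : ι → κ' → ℝ) (hr' : ∀ i k, 0 ≤ r' i k)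
    (hr'Row : ∀ i, ∑ k, r' i k = R i) (hr'Col : ∀ k, ∑ i, r' i k = E' k)
    (hr'Opt : Real.sqrt (∑ i, ∑ k, r' i k * ‖y i - x' k‖ ^ 2) = discW2 R y E' x')
    -- barycentric projections
    (z z' : ι → EuclideanSpace ℝ (Fin d))
    (hz : ∀ i, z i = (R i)⁻¹ • ∑ j, r i j • x j)
    (hz' : ∀ i, z' i = (R i)⁻¹ • ∑ k, r' i k • x' k) :
    Real.sqrt (∑ i, R i * ‖z i - z' i‖ ^ 2) ≤ discW2 R y E x + discW2 R y E' x' :=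
  LOT_le_W2_add_W2_general R y E x E' x' r hr hrRow hrOpt r' hr' hr'Row hr'Opt z z' hz hz'

end
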